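/- Let A = [[αI_r, C],[D, βI_{n-r}]] with n ≤ 2r, and θ ∈ R. Set M(θ) = C*C + DD* - 2Re(e^{-2iθ}DC) with eigenvalues μ_1(θ),…,μ_{n-r}(θ). Then the eigenvalues of H_θ(A) are: Re(e^{-iθ}α) with multiplicity 2r - n, together with λ_{j,±}(θ) = (1/2)Re(e^{-iθ}(α+β)) ± sqrt((Re(e^{-iθ}ω))² - μ_j(θ)/4) for j = 1,…,n-r, where ω = (α-β)/2. -/

import Mathlib

/-!
Write `ζ = exp (-iθ)`. Since `cos θ · Re^J + sin θ · Im^J = (ζ A + ζ̄ J A* J) / 2`, the matrix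
`H_θ(A)` has the block form `[[Re(ζα) I, P], [Q, Re(ζβ) I]]` with `P = (ζ C - ζ̄ D*) / 2`,
`Q = (ζ D - ζ̄ C*) / 2`, and `|ζ| = 1` gives `Q P = -M(θ) / 4`. Taking the Schur complement of the
scalar top-left block, `det (x - H) = (x - a)^(r-s) · det ((x - a)(x - b) - Q P)` with
`a = Re(ζα)`, `b = Re(ζβ)`, so the characteristic polynomial of `H_θ(A)` is
`(X - a)^(r-s) ∏ⱼ ((X - a)(X - b) + μⱼ/4)`, and each quadratic factor has the roots
`(a + b)/2 ± ρⱼ` with `ρⱼ² = ((a - b)/2)² - μⱼ/4`.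
-/

open Matrix Polynomial Complex ComplexConjugate

namespace Matrix

variable {K : Type*} [Field K] {m n : Type*} [Fintype m] [Fintype n] [DecidableEq m] [DecidableEq n]

theorem det_scalar_sub_fromBlocks_smul_one (hmn : Fintype.card n ≤ Fintype.card m) {a x : K}
    (hx : x ≠ a) (b : K) (P : Matrix m n K) (Q : Matrix n m K) :
    (scalar (m ⊕ n) x - fromBlocks (a • 1) P Q (b • 1)).det =
      (x - a) ^ (Fintype.card m - Fintype.card n) * (scalar n ((x - a) * (x - b)) - Q * P).det := by
  have hu : x - a ≠ 0 := sub_ne_zero.2 hx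
  have hblocks : scalar (m ⊕ n) x - fromBlocks (a • 1) P Q (b • 1) =
      fromBlocks (scalar m (x - a)) (-P) (-Q) (scalar n (x - b)) := by
    simp only [scalar_apply, ← smul_one_eq_diagonal, ← fromBlocks_one, fromBlocks_smul,
      sub_eq_add_neg, fromBlocks_neg, fromBlocks_add, add_smul, neg_smul, smul_zero, zero_add]
  have : Invertible (x - a) := invertibleOfNonzero hu
  have : Invertible (scalar m (x - a)) := Invertible.map (scalar m) (x - a)
  have hschur : scalar n (x - b) - -Q * ⅟(scalar m (x - a)) * -P =
      (x - a)⁻¹ • (scalar n ((x - a) * (x - b)) - Q * P) := by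
    rw [invOf_eq_right_inv (b := scalar m (x - a)⁻¹)
      (by rw [← map_mul, mul_inv_cancel₀ hu, map_one])]
    simp only [scalar_apply, ← smul_one_eq_diagonal, smul_sub, smul_smul, inv_mul_cancel_left₀ hu,
      Matrix.neg_mul, Matrix.mul_neg, neg_neg, Matrix.mul_smul, Matrix.smul_mul, smul_neg,
      Matrix.mul_one]
  rw [hblocks, det_fromBlocks₁₁, hschur, det_smul, scalar_apply, det_diagonal, Finset.prod_const,
    Finset.card_univ, inv_pow, pow_sub₀ _ hu hmn]
  ring

theorem charpoly_fromBlocks_smul_one [Infinite K] (hmn : Fintype.card n ≤ Fintype.card m) (a b : K)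
    (P : Matrix m n K) (Q : Matrix n m K) :
    (fromBlocks (a • 1) P Q (b • 1)).charpoly =
      (X - C a) ^ (Fintype.card m - Fintype.card n) *
        (Q * P).charpoly.comp ((X - C a) * (X - C b)) := by
  refine eq_of_infinite_eval_eq _ _ ((Set.finite_singleton a).infinite_compl.mono fun x hx => ?_)
  simp only [Set.mem_ofPred_eq, eval_charpoly, eval_mul, eval_pow, eval_comp, eval_sub, eval_X,
    eval_C]
  exact det_scalar_sub_fromBlocks_smul_one hmn hx b P Q

theorem charpoly_smul_of_charpoly_eq_prod [Infinite K] {M : Matrix n n K} {e : n → K}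
    (hM : M.charpoly = ∏ i, (X - C (e i))) (c : K) :
    (c • M).charpoly = ∏ i, (X - C (c * e i)) := by
  rcases eq_or_ne c 0 with rfl | hc
  · simp [charpoly_zero]
  refine Polynomial.funext fun x => ?_
  have : scalar n x - c • M = c • (scalar n (x / c) - M) := by
    simp only [scalar_apply, ← smul_one_eq_diagonal, smul_sub, smul_smul, mul_div_cancel₀ x hc]
  rw [eval_charpoly, this, det_smul, ← eval_charpoly, hM]
  simp only [eval_prod, eval_sub, eval_X, eval_C, ← Finset.card_univ, Finset.pow_card_mul_prod]
  refine Finset.prod_congr rfl fun i _ => ?_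
  field_simp

end Matrix

namespace Polynomial

theorem X_sub_C_mul_X_sub_C_sub_C_eq {K : Type*} [Field K] [CharZero K] {a b ν ρ : K}
    (h : ρ ^ 2 = ((a - b) / 2) ^ 2 + ν) :
    (X - C a) * (X - C b) - C ν = (X - C ((a + b) / 2 + ρ)) * (X - C ((a + b) / 2 - ρ)) := by
  have hsum : ((a + b) / 2 + ρ) + ((a + b) / 2 - ρ) = a + b := by ring
  have hprod : ((a + b) / 2 + ρ) * ((a + b) / 2 - ρ) = a * b - ν := by linear_combination -h
  calc (X - C a) * (X - C b) - C ν = X ^ 2 - C (a + b) * X + C (a * b - ν) := by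
        simp only [map_add, map_mul, map_sub]; ring
    _ = X ^ 2 - C (((a + b) / 2 + ρ) + ((a + b) / 2 - ρ)) * X +
          C (((a + b) / 2 + ρ) * ((a + b) / 2 - ρ)) := by rw [hsum, hprod]
    _ = _ := by simp only [map_add, map_mul, map_sub]; ring

end Polynomial

theorem cos_smul_add_sin_smul_eq {E : Type*} [AddCommGroup E] [Module ℂ E] (θ : ℝ) (x y : E) :
    (Real.cos θ : ℂ) • ((2 : ℂ)⁻¹ • (x + y)) + (Real.sin θ : ℂ) • ((2 * I)⁻¹ • (x - y)) =
      (2 : ℂ)⁻¹ • (exp (-(θ : ℂ) * I) • x + conj (exp (-(θ : ℂ) * I)) • y) := by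
  rw [← exp_conj, map_mul, map_neg, conj_ofReal, conj_I, neg_mul_neg, ← ofReal_neg,
    exp_ofReal_mul_I, exp_ofReal_mul_I, Real.cos_neg, Real.sin_neg, mul_inv, inv_I]
  match_scalars <;> ring_nf

section Blocks

variable {l m : Type*} [Fintype l] [Fintype m] [DecidableEq l] [DecidableEq m]

theorem fromBlocks_one_neg_one_mul_conjTranspose_mul {α : Type*} [Ring α] [StarRing α]
    (A : Matrix l l α) (B : Matrix l m α) (C : Matrix m l α) (D : Matrix m m α) :
    fromBlocks 1 0 0 (-1) * (fromBlocks A B C D)ᴴ * fromBlocks 1 0 0 (-1) =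
      fromBlocks Aᴴ (-Cᴴ) (-Bᴴ) Dᴴ := by
  simp [fromBlocks_conjTranspose, fromBlocks_multiply]

theorem smul_add_conj_smul_jAdjoint_fromBlocks (ζ α β : ℂ) (C : Matrix l m ℂ) (D : Matrix m l ℂ) :
    (2 : ℂ)⁻¹ • (ζ • fromBlocks (α • 1) C D (β • 1) + conj ζ •
        (fromBlocks 1 0 0 (-1) * (fromBlocks (α • 1) C D (β • 1))ᴴ * fromBlocks 1 0 0 (-1))) =
      fromBlocks (((ζ * α).re : ℂ) • 1) ((2 : ℂ)⁻¹ • (ζ • C - conj ζ • Dᴴ))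
        ((2 : ℂ)⁻¹ • (ζ • D - conj ζ • Cᴴ)) (((ζ * β).re : ℂ) • 1) := by
  simp only [fromBlocks_one_neg_one_mul_conjTranspose_mul, conjTranspose_smul, conjTranspose_one,
    ← starRingEnd_apply, re_eq_add_conj, map_mul, fromBlocks_smul, fromBlocks_add, smul_neg,
    ← sub_eq_add_neg, smul_smul]
  congr 1 <;> module

end Blocks

theorem smul_sub_conj_smul_mul_smul_sub_conj_smul {l m : Type*} [Fintype l] {ζ : ℂ}
    (hζ : conj ζ * ζ = 1) (C : Matrix l m ℂ) (D : Matrix m l ℂ) :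
    ((2 : ℂ)⁻¹ • (ζ • D - conj ζ • Cᴴ)) * ((2 : ℂ)⁻¹ • (ζ • C - conj ζ • Dᴴ)) =
      (-4⁻¹ : ℂ) • (Cᴴ * C + D * Dᴴ - (ζ ^ 2 • (D * C) + (ζ ^ 2 • (D * C))ᴴ)) := by
  simp only [conjTranspose_smul, conjTranspose_mul, Matrix.mul_sub, Matrix.sub_mul,
    Matrix.mul_smul, Matrix.smul_mul, smul_smul, smul_sub, smul_add, ← starRingEnd_apply, map_pow]
  match_scalars
  · ring
  · linear_combination (-4⁻¹ : ℂ) * hζ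
  · linear_combination (-4⁻¹ : ℂ) * hζ
  · ring

theorem stmt8_general {r s : ℕ} (hrs : s ≤ r) (α β : ℂ)
    (C : Matrix (Fin r) (Fin s) ℂ) (D : Matrix (Fin s) (Fin r) ℂ) (θ : ℝ)
    (μ : Fin s → ℝ)
    (J : Matrix (Fin r ⊕ Fin s) (Fin r ⊕ Fin s) ℂ)
    (hJ : J = Matrix.fromBlocks 1 0 0 (-1))
    (A : Matrix (Fin r ⊕ Fin s) (Fin r ⊕ Fin s) ℂ)
    (hA : A = Matrix.fromBlocks (α • 1) C D (β • 1))
    (M : Matrix (Fin s) (Fin s) ℂ)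
    (hM : M = Cᴴ * C + D * Dᴴ -
      (Complex.exp (-2 * (θ : ℂ) * Complex.I) • (D * C) +
        (Complex.exp (-2 * (θ : ℂ) * Complex.I) • (D * C))ᴴ))
    (hμ : M.charpoly = ∏ j : Fin s, (X - Polynomial.C ((μ j : ℂ))))
    (Hθ : Matrix (Fin r ⊕ Fin s) (Fin r ⊕ Fin s) ℂ)
    (hHθ : Hθ = (Real.cos θ : ℂ) • ((2 : ℂ)⁻¹ • (A + J * Aᴴ * J)) +
      (Real.sin θ : ℂ) • ((2 * Complex.I)⁻¹ • (A - J * Aᴴ * J))) :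
    ∃ ρ : Fin s → ℂ,
      (∀ j, ρ j ^ 2 =
        (((Complex.exp (-(θ : ℂ) * Complex.I) * ((α - β) / 2)).re : ℂ)) ^ 2
          - (μ j : ℂ) / 4) ∧
      Hθ.charpoly =
        (X - Polynomial.C (((Complex.exp (-(θ : ℂ) * Complex.I) * α).re : ℂ))) ^ (r - s) *
        ∏ j : Fin s,
          ((X - Polynomial.C
              ((((Complex.exp (-(θ : ℂ) * Complex.I) * (α + β)).re : ℂ)) / 2 + ρ j)) *
           (X - Polynomial.C
              ((((Complex.exp (-(θ : ℂ) * Complex.I) * (α + β)).re : ℂ)) / 2 - ρ j))) := by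
  choose ρ hρ using fun j : Fin s =>
    IsAlgClosed.exists_pow_nat_eq
      ((((exp (-(θ : ℂ) * I) * ((α - β) / 2)).re : ℂ)) ^ 2 - (μ j : ℂ) / 4) two_pos
  refine ⟨ρ, hρ, ?_⟩
  set ζ := exp (-(θ : ℂ) * I)
  have hζ : conj ζ * ζ = 1 := by
    rw [← exp_conj, ← exp_add, map_mul, map_neg, conj_ofReal, conj_I]
    simp
  have hζ_sq : exp (-2 * (θ : ℂ) * I) = ζ ^ 2 := by
    rw [← exp_nat_mul]
    congr 1
    push_cast
    ring
  have hre_add : ((ζ * (α + β)).re : ℂ) = (ζ * α).re + (ζ * β).re := by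
    rw [mul_add, add_re, ofReal_add]
  have hre_half_sub : ((ζ * ((α - β) / 2)).re : ℂ) = ((ζ * α).re - (ζ * β).re) / 2 := by
    rw [← mul_div_assoc, mul_sub, div_ofNat_re, sub_re]
    push_cast
    ring
  rw [hHθ, hJ, hA, cos_smul_add_sin_smul_eq, smul_add_conj_smul_jAdjoint_fromBlocks,
    charpoly_fromBlocks_smul_one (by simpa using hrs),
    smul_sub_conj_smul_mul_smul_sub_conj_smul hζ, ← hζ_sq, ← hM,
    charpoly_smul_of_charpoly_eq_prod hμ, prod_comp, Fintype.card_fin, Fintype.card_fin, hre_add]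
  congr 1
  refine Finset.prod_congr rfl fun j _ => ?_
  rw [sub_comp, X_comp, C_comp]
  apply X_sub_C_mul_X_sub_C_sub_C_eq
  rw [hρ j, hre_half_sub]
  ring

theorem stmt8 {r s : ℕ} (hrs : s ≤ r) (α β : ℂ) (hab : α ≠ β)
    (C : Matrix (Fin r) (Fin s) ℂ) (D : Matrix (Fin s) (Fin r) ℂ) (θ : ℝ)
    (μ : Fin s → ℝ)
    (J : Matrix (Fin r ⊕ Fin s) (Fin r ⊕ Fin s) ℂ)
    (hJ : J = Matrix.fromBlocks 1 0 0 (-1))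
    (A : Matrix (Fin r ⊕ Fin s) (Fin r ⊕ Fin s) ℂ)
    (hA : A = Matrix.fromBlocks (α • 1) C D (β • 1))
    (M : Matrix (Fin s) (Fin s) ℂ)
    (hM : M = Cᴴ * C + D * Dᴴ -
      (Complex.exp (-2 * (θ : ℂ) * Complex.I) • (D * C) +
        (Complex.exp (-2 * (θ : ℂ) * Complex.I) • (D * C))ᴴ))
    (hμ : M.charpoly = ∏ j : Fin s, (X - Polynomial.C ((μ j : ℂ))))
    (Hθ : Matrix (Fin r ⊕ Fin s) (Fin r ⊕ Fin s) ℂ)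
    (hHθ : Hθ = (Real.cos θ : ℂ) • ((2 : ℂ)⁻¹ • (A + J * Aᴴ * J)) +
      (Real.sin θ : ℂ) • ((2 * Complex.I)⁻¹ • (A - J * Aᴴ * J))) :
    ∃ ρ : Fin s → ℂ,
      (∀ j, ρ j ^ 2 =
        (((Complex.exp (-(θ : ℂ) * Complex.I) * ((α - β) / 2)).re : ℂ)) ^ 2
          - (μ j : ℂ) / 4) ∧
      Hθ.charpoly =
        (X - Polynomial.C (((Complex.exp (-(θ : ℂ) * Complex.I) * α).re : ℂ))) ^ (r - s) *
        ∏ j : Fin s,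
          ((X - Polynomial.C
              ((((Complex.exp (-(θ : ℂ) * Complex.I) * (α + β)).re : ℂ)) / 2 + ρ j)) *
           (X - Polynomial.C
              ((((Complex.exp (-(θ : ℂ) * Complex.I) * (α + β)).re : ℂ)) / 2 - ρ j))) :=
  stmt8_general hrs α β C D θ μ J hJ A hA M hM hμ Hθ hHθ
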